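/- arXiv:2509.05083 — 3 statements merged into one kernel-verified Lean document; each statement's English description precedes it below -/
import Mathlib

section
/- Let H be an infinite-dimensional complex Hilbert space. Then the operator 2·id belongs to the closure, in the strong operator topology, of the set of 2-isometries on H; that is, for every ε > 0 and every finite family of vectors x_1, …, x_k ∈ H there exists a 2-isometry S ∈ B(H) with ‖S x_i − 2 x_i‖ < ε for all i = 1, …, k. -/
/-!
If `J` is an isometry and `Q` an orthogonal projection with `Q J = 0`, then for real `t` the
operator `S = J (1 + t Q) + Q` satisfies `S* S - 1 = (1 + t)² Q` and `Q S = Q`, hence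
`S* (S* S - 1) S = S* S - 1`, i.e. `S` is a 2-isometry. Take `J` shifting orthonormal sequences
`c j 0, c j 1, …` and `Q` the projection onto the `c j 0`. Then `S (c j 0) = c j 0 + 2^(m+1) c j 1`
and `S (c j (n+1)) = c j (n+2)`, and the vector with weights `2^-m, 1, 2^-1, …, 2^-m` is an
eigenvector of `S` for the eigenvalue `2` up to an error of norm at most `2^(1-m)`.

In infinite dimensions every vector `G j` of an orthonormal basis of the span of the `x i` can
be made such a normalized approximate eigenvector: pick fresh orthonormal vectors orthogonal to
the span, and reflect their weighted sums onto the `G j`.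
-/

open ContinuousLinearMap Submodule Set Function
open scoped InnerProductSpace

def IsTwoIsometry {A : Type*} [Ring A] [Star A] (S : A) : Prop :=
  1 - 2 • (star S * S) + star S ^ 2 * S ^ 2 = 0

section StarRing

variable {A : Type*} [Ring A] [StarRing A]

theorem isTwoIsometry_iff {S : A} :
    IsTwoIsometry S ↔ star S * (star S * S - 1) * S = star S * S - 1 := by
  have : 1 - 2 • (star S * S) + star S ^ 2 * S ^ 2
      = star S * (star S * S - 1) * S - (star S * S - 1) := by noncomm_ring
  rw [IsTwoIsometry, this, sub_eq_zero]

theorem isTwoIsometry_mul_add {R : Type*} [CommRing R] [StarRing R] [Algebra R A]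
    [StarModule R A] {J Q : A} (hJ : star J * J = 1) (hQ : IsStarProjection Q) (hQJ : Q * J = 0)
    {t : R} (ht : IsSelfAdjoint t) : IsTwoIsometry (J * (1 + t • Q) + Q) := by
  set S := J * (1 + t • Q) + Q
  have hQQ : Q * Q = Q := hQ.isIdempotentElem
  have hQs : star Q = Q := hQ.isSelfAdjoint
  have hJQ : star J * Q = 0 := by simpa [hQs] using congrArg star hQJ
  have hQS : Q * S = Q := by simp [S, mul_add, ← mul_assoc, hQJ, hQQ]
  have hΔ : star S * S - 1 = (1 + t) ^ 2 • Q := by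
    simp only [S, star_add, star_mul, star_one, star_smul, hQs, ht.star_eq]
    simp only [mul_add, add_mul, mul_assoc, ← mul_assoc (star J) J, hJ, hJQ, ← mul_assoc Q J, hQJ,
      smul_mul_assoc, mul_smul_comm, hQQ, one_mul, mul_one, zero_mul, mul_zero]
    module
  rw [isTwoIsometry_iff, hΔ, mul_smul_comm, smul_mul_assoc]
  congr 1
  calc star S * Q * S = star (Q * S) * (Q * S) := by
        rw [star_mul, hQs, ← mul_assoc, mul_assoc (star S) Q Q, hQQ]
    _ = Q := by rw [hQS, hQs, hQQ]

end StarRing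

section Telescoping

variable {𝕜 V : Type*} [RCLike 𝕜] [AddCommGroup V] [Module 𝕜 V]

noncomputable def approxEigenWeight (m : ℕ) : ℕ → ℝ
  | 0 => 2⁻¹ ^ m
  | n + 1 => 2⁻¹ ^ n

theorem one_le_sum_approxEigenWeight_sq (m : ℕ) :
    1 ≤ ∑ n ∈ Finset.range (m + 2), approxEigenWeight m n ^ 2 :=
  calc (1 : ℝ) = approxEigenWeight m 1 ^ 2 := by simp [approxEigenWeight]
    _ ≤ _ := Finset.single_le_sum (fun n _ => sq_nonneg (approxEigenWeight m n)) (by simp)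

theorem apply_sub_two_smul_sum_approxEigenWeight {F : Type*} [FunLike F V V]
    [LinearMapClass F 𝕜 V V] (S : F) (c : ℕ → V) (m : ℕ)
    (h₀ : S (c 0) = c 0 + (2 ^ (m + 1) : 𝕜) • c 1)
    (hsucc : ∀ n, S (c (n + 1)) = c (n + 2)) :
    S (∑ n ∈ Finset.range (m + 2), (approxEigenWeight m n : 𝕜) • c n)
      - (2 : 𝕜) • ∑ n ∈ Finset.range (m + 2), (approxEigenWeight m n : 𝕜) • c n
      = (2⁻¹ ^ m : 𝕜) • (c (m + 2) - c 0) := by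
  let f : ℕ → V := fun n => (2 * 2⁻¹ ^ n : 𝕜) • c (n + 1)
  have hstep : ∀ n, (approxEigenWeight m (n + 1) : 𝕜) • (S (c (n + 1)) - (2 : 𝕜) • c (n + 1))
      = f (n + 1) - f n := by
    intro n
    rw [hsucc]
    simp only [approxEigenWeight, f]
    push_cast
    module
  calc _ = ∑ n ∈ Finset.range (m + 2), (approxEigenWeight m n : 𝕜) • (S (c n) - (2 : 𝕜) • c n) := by
        simp [Finset.smul_sum, smul_sub, smul_comm (2 : 𝕜), Finset.sum_sub_distrib]
    _ = f (m + 1) - f 0 + (2⁻¹ ^ m : 𝕜) • (S (c 0) - (2 : 𝕜) • c 0) := by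
        rw [Finset.sum_range_succ', Finset.sum_congr rfl fun n _ => hstep n, Finset.sum_range_sub]
        simp only [approxEigenWeight]
        push_cast
        rfl
    _ = _ := by
        rw [h₀]
        have h : (2⁻¹ : 𝕜) ^ m * 2 ^ m = 1 := by
          rw [← mul_pow, inv_mul_cancel₀ two_ne_zero, one_pow]
        simp only [f, pow_succ]
        linear_combination (norm := module) (2 * h) • c 1

end Telescoping

section InnerProductSpace

variable {𝕜 E ι : Type*} [RCLike 𝕜] [NormedAddCommGroup E] [InnerProductSpace 𝕜 E]

theorem Submodule.mem_orthogonal_span_range_iff {v : ι → E} {x : E} :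
    x ∈ (span 𝕜 (range v))ᗮ ↔ ∀ i, ⟪v i, x⟫_𝕜 = 0 := by
  rw [← span_singleton_le_iff_mem, ← isOrtho_iff_le, isOrtho_comm, isOrtho_span]
  simp

theorem exists_orthonormal_of_not_finiteDimensional (hE : ¬FiniteDimensional 𝕜 E) (κ : Type*)
    [Countable κ] : ∃ e : κ → E, Orthonormal 𝕜 e := by
  let b := Module.Basis.ofVectorSpace 𝕜 E
  have : Infinite (Module.Basis.ofVectorSpaceIndex 𝕜 E) :=
    not_finite_iff_infinite.mp fun _ => hE (Module.Finite.of_basis b)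
  obtain ⟨g, hg⟩ := Countable.exists_injective_nat κ
  have hu : LinearIndependent 𝕜 (b ∘ Infinite.natEmbedding _) :=
    b.linearIndependent.comp _ (Infinite.natEmbedding _).injective
  exact ⟨InnerProductSpace.gramSchmidtNormed 𝕜 (b ∘ Infinite.natEmbedding _) ∘ g,
    (InnerProductSpace.gramSchmidtNormed_orthonormal hu).comp g hg⟩

theorem Submodule.exists_orthonormal_orthogonal (hE : ¬FiniteDimensional 𝕜 E) (F : Submodule 𝕜 E)
    [FiniteDimensional 𝕜 F] (κ : Type*) [Countable κ] :
    ∃ e : κ → E, Orthonormal 𝕜 e ∧ ∀ i, e i ∈ Fᗮ := by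
  have hF : ¬FiniteDimensional 𝕜 Fᗮ := fun _ => by
    have := finiteDimensional_sup F Fᗮ
    rw [sup_orthogonal_of_hasOrthogonalProjection] at this
    exact hE (topEquiv.finiteDimensional)
  obtain ⟨e, he⟩ := exists_orthonormal_of_not_finiteDimensional hF κ
  exact ⟨fun i => e i, he.comp_linearIsometry Fᗮ.subtypeₗᵢ, fun i => (e i).2⟩

theorem Orthonormal.exists_linearIsometryEquiv_apply_eq [Finite ι] {G W : ι → E}
    (hG : Orthonormal 𝕜 G) (hW : Orthonormal 𝕜 W) (hGW : ∀ i j, ⟪G i, W j⟫_𝕜 = 0) :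
    ∃ R : E ≃ₗᵢ[𝕜] E, ∀ j, R (W j) = G j := by
  classical
  set L := span 𝕜 (range fun j => G j - W j)
  have : FiniteDimensional 𝕜 L := FiniteDimensional.span_of_finite 𝕜 (finite_range _)
  set R := reflection Lᗮ
  refine ⟨R, fun j => ?_⟩
  have hsum : R (G j + W j) = G j + W j := by
    refine reflection_mem_subspace_eq_self (mem_orthogonal_span_range_iff.mpr fun k => ?_)
    have hWG : ⟪W k, G j⟫_𝕜 = 0 := by rw [inner_eq_zero_symm]; exact hGW j k
    simp only [inner_sub_left, inner_add_right, hGW, hWG, orthonormal_iff_ite.mp hG,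
      orthonormal_iff_ite.mp hW]
    ring
  have hdiff : R (G j - W j) = -(G j - W j) :=
    reflection_mem_subspace_orthogonal_precomplement_eq_neg (subset_span ⟨j, rfl⟩)
  refine smul_right_injective E (two_ne_zero (α := 𝕜)) ?_
  calc (2 : 𝕜) • R (W j) = R (G j + W j) - R (G j - W j) := by
        rw [← map_sub, ← map_smul]; congr 1; module
    _ = (2 : 𝕜) • G j := by rw [hsum, hdiff]; module

theorem Orthonormal.orthonormal_sum_smul {κ : Type*} {e : ι × κ → E} (he : Orthonormal 𝕜 e)
    (s : Finset κ) {p : κ → 𝕜} (hp : ∑ n ∈ s, ‖p n‖ ^ 2 = 1) :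
    Orthonormal 𝕜 fun j => ∑ n ∈ s, p n • e (j, n) := by
  classical
  rw [orthonormal_iff_ite]
  intro i j
  split_ifs with hij
  · subst hij
    have h := (he.comp _ (Prod.mk_right_injective i)).inner_sum p p s
    simp only [comp_apply, RCLike.conj_mul] at h
    rw [h]
    exact_mod_cast hp
  · rw [sum_inner]
    refine Finset.sum_eq_zero fun n _ => ?_
    rw [inner_smul_left, inner_sum]
    refine mul_eq_zero_of_right _ (Finset.sum_eq_zero fun m _ => ?_)
    rw [inner_smul_right, he.inner_eq_zero (by simp [hij]), mul_zero]

theorem exists_orthonormal_sum_smul_eq (hE : ¬FiniteDimensional 𝕜 E) [Finite ι] {G : ι → E}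
    (hG : Orthonormal 𝕜 G) {κ : Type*} [Countable κ] (s : Finset κ) {p : κ → 𝕜}
    (hp : ∑ n ∈ s, ‖p n‖ ^ 2 = 1) :
    ∃ c : ι × κ → E, Orthonormal 𝕜 c ∧ ∀ j, G j = ∑ n ∈ s, p n • c (j, n) := by
  have : FiniteDimensional 𝕜 (span 𝕜 (range G)) :=
    FiniteDimensional.span_of_finite 𝕜 (finite_range _)
  obtain ⟨e, he, he_perp⟩ := (span 𝕜 (range G)).exists_orthonormal_orthogonal hE (ι × κ)
  have hGW : ∀ i j, ⟪G i, ∑ n ∈ s, p n • e (j, n)⟫_𝕜 = 0 := fun i j => by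
    simp [inner_sum, inner_smul_right, mem_orthogonal_span_range_iff.mp (he_perp _) i]
  obtain ⟨R, hR⟩ := hG.exists_linearIsometryEquiv_apply_eq (he.orthonormal_sum_smul s hp) hGW
  refine ⟨R ∘ e, he.comp_linearIsometryEquiv R, fun j => ?_⟩
  simp [← hR j, map_sum, map_smul]

theorem OrthonormalBasis.norm_apply_le_card_mul {V W : Type*} [NormedAddCommGroup V]
    [InnerProductSpace 𝕜 V] [SeminormedAddCommGroup W] [NormedSpace 𝕜 W] [Fintype ι]
    (b : OrthonormalBasis ι 𝕜 V) (T : V →ₗ[𝕜] W) {δ : ℝ} (hT : ∀ j, ‖T (b j)‖ ≤ δ) (x : V) :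
    ‖T x‖ ≤ Fintype.card ι * δ * ‖x‖ := by
  have hrepr : ∀ j, ‖b.repr x j‖ ≤ ‖x‖ := fun j => by
    rw [b.repr_apply_apply]
    exact (norm_inner_le_norm _ _).trans (by rw [b.orthonormal.1 j, one_mul])
  calc ‖T x‖ = ‖∑ j, b.repr x j • T (b j)‖ := by
        conv_lhs => rw [← b.sum_repr x]
        simp [map_sum, map_smul]
    _ ≤ ∑ j, ‖b.repr x j‖ * ‖T (b j)‖ := (norm_sum_le _ _).trans (by simp [norm_smul])
    _ ≤ ∑ _j : ι, ‖x‖ * δ := by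
        gcongr with j
        exacts [hrepr j, hT j]
    _ = Fintype.card ι * δ * ‖x‖ := by simp; ring

variable [CompleteSpace E]

noncomputable def Orthonormal.hilbertBasisClosure {v : ι → E} (hv : Orthonormal 𝕜 v) :
    HilbertBasis ι 𝕜 (span 𝕜 (range v)).topologicalClosure :=
  HilbertBasis.mkOfOrthogonalEqBot
    (hv.codRestrict _ fun i => le_topologicalClosure _ (subset_span (mem_range_self i))) <| by
    refine eq_bot_iff.mpr fun y hy => ?_
    rw [mem_orthogonal_span_range_iff] at hy
    have hy' : (y : E) ∈ (span 𝕜 (range v)).topologicalClosureᗮ := by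
      rw [orthogonal_closure, mem_orthogonal_span_range_iff]
      exact hy
    simpa using inner_self_eq_zero.mp (hy' y y.2)

theorem Orthonormal.coe_hilbertBasisClosure {v : ι → E} (hv : Orthonormal 𝕜 v) (i : ι) :
    (hv.hilbertBasisClosure i : E) = v i := by
  rw [Orthonormal.hilbertBasisClosure, HilbertBasis.coe_mkOfOrthogonalEqBot]
  rfl

theorem Orthonormal.exists_isometry_apply_eq_comp {v : ι → E} (hv : Orthonormal 𝕜 v) {f : ι → ι}
    (hf : Injective f) :
    ∃ J : E →L[𝕜] E, star J * J = 1 ∧ (∀ i, J (v i) = v (f i)) ∧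
      ∀ i ∉ range f, ∀ x, ⟪v i, J x⟫_𝕜 = 0 := by
  classical
  set K := (span 𝕜 (range v)).topologicalClosure
  set K' := (span 𝕜 (range (v ∘ f))).topologicalClosure
  set b := hv.hilbertBasisClosure
  set b' := (hv.comp f hf).hilbertBasisClosure
  let U : K →ₗᵢ[𝕜] E := K'.subtypeₗᵢ.comp (b.repr.trans b'.repr.symm).toLinearIsometry
  have hUK' : ∀ y, U y ∈ K' := fun y => Subtype.prop _
  have hK'K : K' ≤ K := topologicalClosure_mono (span_mono (range_comp_subset_range f v))
  let J : E →L[𝕜] E := U.toContinuousLinearMap ∘L K.orthogonalProjectionOnto + Kᗮ.starProjection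
  have hJ : ∀ x, J x = U (K.orthogonalProjectionOnto x) + Kᗮ.starProjection x := fun _ => rfl
  have hvK : ∀ i, v i ∈ K := fun i => le_topologicalClosure _ (subset_span (mem_range_self i))
  refine ⟨J, (J.norm_map_iff_adjoint_comp_self.mp fun x => ?_), fun i => ?_, fun i hi x => ?_⟩
  · have hperp : ⟪U (K.orthogonalProjectionOnto x), Kᗮ.starProjection x⟫_𝕜 = 0 :=
      inner_right_of_mem_orthogonal (hK'K (hUK' _)) (starProjection_apply_mem _ _)
    have := norm_add_sq_eq_norm_sq_add_norm_sq_of_inner_eq_zero _ _ hperp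
    rw [← sq_eq_sq₀ (norm_nonneg _) (norm_nonneg _), hJ, sq, this, LinearIsometry.norm_map,
      norm_sq_eq_add_norm_sq_projection x K]
    simp only [sq]
    rfl
  · have hb : K.orthogonalProjectionOnto (v i) = b i :=
      Subtype.ext <|
        (starProjection_eq_self_iff.mpr (hvK i)).trans (hv.coe_hilbertBasisClosure i).symm
    rw [hJ, hb, starProjection_orthogonal_apply_eq_zero (hvK i), add_zero]
    change (b'.repr.symm (b.repr (b i)) : E) = v (f i)
    rw [b.repr_self, b'.repr_symm_single, Orthonormal.coe_hilbertBasisClosure, comp_apply]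
  · have hvi : v i ∈ K'ᗮ := by
      rw [orthogonal_closure, mem_orthogonal_span_range_iff]
      intro k
      exact hv.inner_eq_zero fun h => hi ⟨k, h⟩
    rw [hJ, inner_add_right, inner_left_of_mem_orthogonal (hUK' _) hvi,
      inner_right_of_mem_orthogonal (hvK i) (starProjection_apply_mem _ _), add_zero]

theorem Orthonormal.exists_isTwoIsometry_apply_eq {c : ι × ℕ → E} (hc : Orthonormal 𝕜 c)
    (σ : ℝ) :
    ∃ S : E →L[𝕜] E, IsTwoIsometry S ∧
      (∀ j, S (c (j, 0)) = c (j, 0) + (σ : 𝕜) • c (j, 1)) ∧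
      ∀ j n, S (c (j, n + 1)) = c (j, n + 2) := by
  obtain ⟨J, hJ, hJc, hJperp⟩ :=
    hc.exists_isometry_apply_eq_comp (injective_id.prodMap Nat.succ_injective)
  set K₀ := (span 𝕜 (range fun j => c (j, 0))).topologicalClosure
  set Q := K₀.starProjection
  have hK₀ : ∀ x, x ∈ K₀ᗮ ↔ ∀ j, ⟪c (j, 0), x⟫_𝕜 = 0 := fun x => by
    rw [orthogonal_closure, mem_orthogonal_span_range_iff]
  have hQ₀ : ∀ j, Q (c (j, 0)) = c (j, 0) := fun j =>
    starProjection_eq_self_iff.mpr (le_topologicalClosure _ (subset_span ⟨j, rfl⟩))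
  have hQsucc : ∀ j n, Q (c (j, n + 1)) = 0 := fun j n =>
    (starProjection_apply_eq_zero_iff K₀).mpr ((hK₀ _).mpr fun k => hc.inner_eq_zero (by simp))
  have hQJ : Q * J = 0 := ContinuousLinearMap.ext fun x =>
    (starProjection_apply_eq_zero_iff K₀).mpr ((hK₀ _).mpr fun k => hJperp _ (by simp) x)
  have hJ' : ∀ j n, J (c (j, n)) = c (j, n + 1) := fun j n => hJc (j, n)
  set t : 𝕜 := ((σ - 1 : ℝ) : 𝕜)
  have hS : ∀ x, (J * (1 + t • Q) + Q) x = J x + t • J (Q x) + Q x := fun x => by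
    simp only [add_apply, mul_apply_eq_comp, one_apply_eq_self, smul_apply, map_add, map_smul]
  refine ⟨J * (1 + t • Q) + Q,
    isTwoIsometry_mul_add hJ isStarProjection_starProjection hQJ (RCLike.conj_ofReal _),
    fun j => ?_, fun j n => ?_⟩
  · rw [hS, hQ₀, hJ']
    simp only [t, RCLike.ofReal_sub, RCLike.ofReal_one]
    module
  · rw [hS, hQsucc, hJ', map_zero, smul_zero, add_zero, add_zero]

theorem Orthonormal.exists_isTwoIsometry_norm_apply_sub_two_smul_le
    (hE : ¬FiniteDimensional 𝕜 E) [Finite ι] {G : ι → E} (hG : Orthonormal 𝕜 G) {δ : ℝ}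
    (hδ : 0 < δ) :
    ∃ S : E →L[𝕜] E, IsTwoIsometry S ∧ ∀ j, ‖S (G j) - (2 : 𝕜) • G j‖ ≤ δ := by
  obtain ⟨m, hm⟩ := exists_pow_lt_of_lt_one (half_pos hδ) (two_inv_lt_one (α := ℝ))
  set w := approxEigenWeight m
  set N := √(∑ n ∈ Finset.range (m + 2), w n ^ 2)
  have hN : 1 ≤ N := Real.one_le_sqrt.mpr (one_le_sum_approxEigenWeight_sq m)
  have hp : ∑ n ∈ Finset.range (m + 2), ‖((w n / N : ℝ) : 𝕜)‖ ^ 2 = 1 := by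
    simp only [RCLike.norm_ofReal, sq_abs, div_pow, ← Finset.sum_div]
    rw [Real.sq_sqrt (Finset.sum_nonneg fun n _ => sq_nonneg (w n)), div_self]
    exact ne_of_gt (Real.sqrt_pos.mp (zero_lt_one.trans_le hN))
  obtain ⟨c, hc, hGc⟩ := exists_orthonormal_sum_smul_eq hE hG (Finset.range (m + 2)) hp
  obtain ⟨S, hS, hS₀, hSsucc⟩ := hc.exists_isTwoIsometry_apply_eq (2 ^ (m + 1))
  refine ⟨S, hS, fun j => ?_⟩
  have key := apply_sub_two_smul_sum_approxEigenWeight S (fun n => c (j, n)) m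
    (by rw [hS₀ j]; push_cast; rfl) (hSsucc j)
  have hGj : G j = ((N⁻¹ : ℝ) : 𝕜) • ∑ n ∈ Finset.range (m + 2), (w n : 𝕜) • c (j, n) := by
    rw [hGc j, Finset.smul_sum]
    refine Finset.sum_congr rfl fun n _ => ?_
    rw [smul_smul, div_eq_inv_mul]
    push_cast
    rfl
  calc ‖S (G j) - (2 : 𝕜) • G j‖
      = ‖((N⁻¹ : ℝ) : 𝕜) • (2⁻¹ ^ m : 𝕜) • (c (j, m + 2) - c (j, 0))‖ := by
        rw [hGj, map_smul, smul_comm (2 : 𝕜), ← smul_sub, key]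
    _ = N⁻¹ * 2⁻¹ ^ m * ‖c (j, m + 2) - c (j, 0)‖ := by
        simp [norm_smul, abs_of_nonneg (zero_le_one.trans hN), mul_assoc]
    _ ≤ 1 * (δ / 2) * (1 + 1) := by
        gcongr
        · exact inv_le_one_of_one_le₀ hN
        · exact (norm_sub_le _ _).trans (by rw [hc.1, hc.1])
    _ = δ := by ring

theorem exists_isTwoIsometry_forall_mem_norm_apply_sub_two_smul_le (hE : ¬FiniteDimensional 𝕜 E)
    (F : Submodule 𝕜 E) [FiniteDimensional 𝕜 F] {ε : ℝ} (hε : 0 < ε) :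
    ∃ S : E →L[𝕜] E, IsTwoIsometry S ∧ ∀ x ∈ F, ‖S x - (2 : 𝕜) • x‖ ≤ ε * ‖x‖ := by
  set b := stdOrthonormalBasis 𝕜 F
  set d := Module.finrank 𝕜 F
  obtain ⟨S, hS, hSb⟩ := Orthonormal.exists_isTwoIsometry_norm_apply_sub_two_smul_le hE
    (b.orthonormal.comp_linearIsometry F.subtypeₗᵢ) (δ := ε / (d + 1)) (by positivity)
  refine ⟨S, hS, fun x hx => ?_⟩
  have hd : (d : ℝ) * (ε / (d + 1)) ≤ ε := by
    rw [mul_div_assoc', div_le_iff₀ (by positivity)]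
    linarith
  calc ‖S x - (2 : 𝕜) • x‖ ≤ d * (ε / (d + 1)) * ‖x‖ := by
        simpa using b.norm_apply_le_card_mul
          ((S - (2 : 𝕜) • 1 : E →L[𝕜] E).toLinearMap ∘ₗ F.subtype) hSb ⟨x, hx⟩
    _ ≤ ε * ‖x‖ := by gcongr

end InnerProductSpace

/-- On an infinite-dimensional complex Hilbert space, the operator `2 • id` lies in the
closure of the set of 2-isometries in the strong operator topology. -/
theorem twoId_mem_SOT_closure_of_two_isometries {H : Type*} [NormedAddCommGroup H]
    [InnerProductSpace ℂ H] [CompleteSpace H] (hH : ¬ FiniteDimensional ℂ H) :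
    ∀ ε : ℝ, 0 < ε → ∀ (k : ℕ) (x : Fin k → H),
      ∃ S : H →L[ℂ] H,
        (1 - 2 • (adjoint S * S) + adjoint S ^ 2 * S ^ 2 = 0) ∧
        ∀ i, ‖S (x i) - (2 : ℂ) • x i‖ < ε := by
  intro ε hε k x
  have : FiniteDimensional ℂ (span ℂ (range x)) :=
    FiniteDimensional.span_of_finite ℂ (finite_range x)
  set R := 1 + ∑ i, ‖x i‖
  have hR : ∀ i, ‖x i‖ < R := fun i => by
    have := Finset.single_le_sum (fun j _ => norm_nonneg (x j)) (Finset.mem_univ i)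
    linarith
  obtain ⟨S, hS, hSx⟩ := exists_isTwoIsometry_forall_mem_norm_apply_sub_two_smul_le hH
    (span ℂ (range x)) (ε := ε / R) (by positivity)
  refine ⟨S, hS, fun i => (hSx _ (subset_span ⟨i, rfl⟩)).trans_lt ?_⟩
  rw [div_mul_eq_mul_div, div_lt_iff₀ (by positivity)]
  exact mul_lt_mul_of_pos_left (hR i) hε
end

section
/- Let T be a 2-isometry on a complex Hilbert space H. Then for every natural number n ≥ 1 one has T*T ≥ (n/(n+1))·id in the order on self-adjoint operators, i.e. ‖Tx‖² ≥ (n/(n+1))·‖x‖² for all x ∈ H. -/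
open ContinuousLinearMap

/-! The 2-isometry identity says that along every orbit the sequence `‖Tᵏx‖²` has vanishing second
differences, so it is arithmetic: `‖Tᵏx‖² = ‖x‖² + k (‖Tx‖² - ‖x‖²)`. Its nonnegativity at `k = n + 1`
is exactly `(n + 1) ‖Tx‖² ≥ n ‖x‖²`. -/

theorem eq_add_mul_of_second_diff_eq_zero {R : Type*} [CommRing R] {a : ℕ → R}
    (h : ∀ k, a (k + 2) - 2 * a (k + 1) + a k = 0) (k : ℕ) : a k = a 0 + k * (a 1 - a 0) := by
  have diff : ∀ k, a (k + 1) - a k = a 1 - a 0 := by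
    intro k
    induction k with
    | zero => rfl
    | succ k ih => linear_combination h k + ih
  induction k with
  | zero => simp
  | succ k ih => push_cast; linear_combination diff k + ih

section TwoIsometry

variable {𝕜 H : Type*} [RCLike 𝕜] [NormedAddCommGroup H] [InnerProductSpace 𝕜 H] [CompleteSpace H]
  {T : H →L[𝕜] H}

theorem norm_sq_apply_apply_of_two_isometry
    (hT : 1 - 2 • (adjoint T * T) + adjoint T ^ 2 * T ^ 2 = 0) (x : H) :
    ‖T (T x)‖ ^ 2 - 2 * ‖T x‖ ^ 2 + ‖x‖ ^ 2 = 0 := by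
  have h := congrArg (fun S : H →L[𝕜] H => RCLike.re (inner 𝕜 (S x) x)) hT
  simp only [add_apply, sub_apply, pow_two, mul_apply_eq_comp, one_apply_eq_self, zero_apply,
    inner_zero_left, inner_add_left, inner_sub_left, two_smul, map_add, map_sub, map_zero] at h
  rw [adjoint_inner_left, adjoint_inner_left, adjoint_inner_left] at h
  simp only [inner_self_eq_norm_sq] at h
  linarith

theorem norm_sq_pow_apply_of_two_isometry
    (hT : 1 - 2 • (adjoint T * T) + adjoint T ^ 2 * T ^ 2 = 0) (x : H) (k : ℕ) :
    ‖(T ^ k) x‖ ^ 2 = ‖x‖ ^ 2 + k * (‖T x‖ ^ 2 - ‖x‖ ^ 2) := by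
  simpa using eq_add_mul_of_second_diff_eq_zero (a := fun k ↦ ‖(T ^ k) x‖ ^ 2)
    (fun k ↦ by simpa only [pow_succ' T, mul_apply_eq_comp] using
      norm_sq_apply_apply_of_two_isometry hT ((T ^ k) x)) k

end TwoIsometry

/-- For a 2-isometry `T` on a complex Hilbert space and every `n ≥ 1`,
one has `T*T ≥ (n/(n+1)) • id`, i.e. `‖Tx‖² ≥ (n/(n+1))‖x‖²` for all `x`. -/
theorem two_isometry_lower_bound {H : Type*} [NormedAddCommGroup H] [InnerProductSpace ℂ H]
    [CompleteSpace H] (T : H →L[ℂ] H)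
    (hT : 1 - 2 • (adjoint T * T) + adjoint T ^ 2 * T ^ 2 = 0) :
    ∀ n : ℕ, 1 ≤ n → ∀ x : H, (n : ℝ) / (n + 1) * ‖x‖ ^ 2 ≤ ‖T x‖ ^ 2 := by
  intro n _ x
  have orbit_nonneg : 0 ≤ ‖x‖ ^ 2 + (n + 1 : ℕ) * (‖T x‖ ^ 2 - ‖x‖ ^ 2) :=
    norm_sq_pow_apply_of_two_isometry hT x (n + 1) ▸ by positivity
  rw [div_mul_eq_mul_div, div_le_iff₀ (by positivity)]
  push_cast at orbit_nonneg
  linarith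
end

section
/- Let L and K be complex Hilbert spaces, let R : L → L be an isometric bounded linear operator and let V : K → L be a bounded linear operator with R*V = 0. Then the block operator B = [[R, V], [0, id_K]] on the Hilbert space direct sum L ⊕ K, defined by B(l ⊕ k) = (R l + V k) ⊕ k, is a 2-isometry. -/
/-!
Writing `x = l ⊕ k`, orthogonality of the ranges of `R` and `V` together with `‖R l‖ = ‖l‖` gives
`‖B x‖² = ‖x‖² + ‖V k‖²`, while `B` leaves the `K`-component `k` unchanged. Hence
`n ↦ ‖Bⁿ x‖²` grows by the constant `‖V k‖²` at each step, so its second difference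
`‖x‖² - 2‖B x‖² + ‖B² x‖²` vanishes; over `ℂ` an operator whose quadratic form vanishes is zero.
-/

open ContinuousLinearMap
open scoped InnerProductSpace

namespace ContinuousLinearMap

variable {E : Type*} [NormedAddCommGroup E] [InnerProductSpace ℂ E] [CompleteSpace E]

def IsTwoIsometry (T : E →L[ℂ] E) : Prop :=
  1 - 2 • (adjoint T * T) + adjoint T ^ 2 * T ^ 2 = 0

theorem isTwoIsometry_iff_norm_sq (T : E →L[ℂ] E) :
    IsTwoIsometry T ↔ ∀ x, ‖x‖ ^ 2 - 2 * ‖T x‖ ^ 2 + ‖T (T x)‖ ^ 2 = 0 := by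
  have inner_defect_self (x : E) :
      ⟪(1 - 2 • (adjoint T * T) + adjoint T ^ 2 * T ^ 2 : E →L[ℂ] E) x, x⟫_ℂ =
        ((‖x‖ ^ 2 - 2 * ‖T x‖ ^ 2 + ‖T (T x)‖ ^ 2 : ℝ) : ℂ) := by
    rw [add_apply, sub_apply, smul_apply, one_apply_eq_self, pow_two, pow_two, mul_apply_eq_comp,
      mul_apply_eq_comp, mul_apply_eq_comp, mul_apply_eq_comp]
    simp only [two_smul, inner_add_left, inner_sub_left, adjoint_inner_left,
      inner_self_eq_norm_sq_to_K, RCLike.ofReal_eq_complex_ofReal]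
    push_cast
    ring
  rw [IsTwoIsometry, ← coe_inj, toLinearMap_zero, ← inner_map_self_eq_zero]
  simp only [coe_coe, inner_defect_self, Complex.ofReal_eq_zero]

end ContinuousLinearMap

theorem inner_apply_apply_eq_zero_of_adjoint_comp_eq_zero {𝕜 L M K : Type*} [RCLike 𝕜]
    [NormedAddCommGroup L] [InnerProductSpace 𝕜 L] [CompleteSpace L]
    [NormedAddCommGroup M] [InnerProductSpace 𝕜 M] [CompleteSpace M]
    [NormedAddCommGroup K] [NormedSpace 𝕜 K] {R : M →L[𝕜] L} {V : K →L[𝕜] L}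
    (hRV : (adjoint R).comp V = 0) (m : M) (k : K) : ⟪R m, V k⟫_𝕜 = 0 := by
  rw [← adjoint_inner_right, ← comp_apply, hRV, zero_apply, inner_zero_right]

theorem norm_sq_block_apply {𝕜 L K : Type*} [RCLike 𝕜]
    [NormedAddCommGroup L] [InnerProductSpace 𝕜 L] [NormedAddCommGroup K]
    {R : L → L} (hR : ∀ l, ‖R l‖ = ‖l‖) {V : K → L} (hRV : ∀ l k, ⟪R l, V k⟫_𝕜 = 0)
    {B : WithLp 2 (L × K) → WithLp 2 (L × K)}
    (hB : ∀ p, B p = WithLp.toLp 2 (R p.fst + V p.snd, p.snd)) (x : WithLp 2 (L × K)) :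
    ‖B x‖ ^ 2 = ‖x‖ ^ 2 + ‖V x.snd‖ ^ 2 := by
  simp only [hB, WithLp.prod_norm_sq_eq_of_L2, WithLp.toLp_fst, WithLp.toLp_snd]
  rw [norm_add_sq (𝕜 := 𝕜), hRV, map_zero, hR]
  ring

/-- If `R : L → L` is an isometry and `V : K → L` satisfies `R*V = 0`, then the block
operator `B = [[R, V], [0, id]]` on the Hilbert space direct sum `L ⊕ K`, i.e.
`B (l ⊕ k) = (R l + V k) ⊕ k`, is a 2-isometry. -/
theorem block_operator_two_isometry {L K : Type*}
    [NormedAddCommGroup L] [InnerProductSpace ℂ L] [CompleteSpace L]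
    [NormedAddCommGroup K] [InnerProductSpace ℂ K] [CompleteSpace K]
    (R : L →L[ℂ] L) (hR : ∀ l : L, ‖R l‖ = ‖l‖)
    (V : K →L[ℂ] L) (hRV : (adjoint R).comp V = 0)
    (B : WithLp 2 (L × K) →L[ℂ] WithLp 2 (L × K))
    (hB : ∀ p : WithLp 2 (L × K), B p =
      (WithLp.equiv 2 (L × K)).symm
        (R ((WithLp.equiv 2 (L × K)) p).1 + V ((WithLp.equiv 2 (L × K)) p).2,
          ((WithLp.equiv 2 (L × K)) p).2)) :
    1 - 2 • (adjoint B * B) + adjoint B ^ 2 * B ^ 2 = 0 := by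
  have hRV' := inner_apply_apply_eq_zero_of_adjoint_comp_eq_zero hRV
  refine (isTwoIsometry_iff_norm_sq B).mpr fun x => ?_
  have hBx := norm_sq_block_apply hR hRV' hB x
  have hBBx := norm_sq_block_apply hR hRV' hB (B x)
  have hsnd : (B x).snd = x.snd := by rw [hB]; rfl
  rw [hsnd] at hBBx
  linarith
end
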